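/- Let n ≥ 1, let V ⊆ ℝ^{2n} be open, let F : V → ℝ be C², and suppose that (DY_F(x))² = I_{2n} for every x ∈ V, where DY_F(x) is the Jacobian matrix of the Hamiltonian vector field Y_F at x. Define p₁(x) := x + Y_F(x) and p₂(x) := x − Y_F(x). Then for every x ∈ V: (i) the Jacobians Dp₁(x) and Dp₂(x) each have rank exactly n; and (ii) the images of Dp₁(x) and of Dp₂(x) are ω-isotropic (hence Lagrangian) subspaces of ℝ^{2n}: ω(Dp₁(x)u, Dp₁(x)v) = 0 and ω(Dp₂(x)u, Dp₂(x)v) = 0 for all u, v ∈ ℝ^{2n}. (This is the key step showing that any improper affine sphere whose shape operator squares to the identity is locally a center-chord improper affine sphere.) -/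

import Mathlib

/-! At every point the Jacobian `A = DY_F(x)` equals `J · Hess F(x)`, so the symmetry of the
Hessian puts `A` in the symplectic Lie algebra: `Aᵀ J = -J A`. Together with `A² = 1` this gives
`(1 ± A)ᵀ J (1 ± A) = J + Aᵀ J A = J - J A² = 0`, i.e. the images of `1 ± A` are isotropic, and
an isotropic subspace of the nondegenerate form has dimension at most `n`. Since
`(1 + A) + (1 - A) = 2` is invertible, the two ranks add up to at least `2n`, so both are `n`. -/

open Matrix

/-- The standard symplectic form on `ℝ^{2n}`, indexed by `Fin n ⊕ Fin n`. -/
noncomputable def sform (n : ℕ) (u v : Fin n ⊕ Fin n → ℝ) : ℝ :=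
  ∑ i : Fin n, (u (Sum.inl i) * v (Sum.inr i) - u (Sum.inr i) * v (Sum.inl i))

/-- The Hamiltonian vector field of `F`. -/
noncomputable def hamVF (n : ℕ) (F : (Fin n ⊕ Fin n → ℝ) → ℝ) (x : Fin n ⊕ Fin n → ℝ) :
    Fin n ⊕ Fin n → ℝ :=
  Sum.elim (fun i => -(fderiv ℝ F x (Pi.single (Sum.inr i) 1)))
    (fun i => fderiv ℝ F x (Pi.single (Sum.inl i) 1))

/-- The Jacobian matrix of a map between finite-dimensional coordinate spaces. -/
noncomputable def jacM {ι κ : Type*} [Fintype ι] [DecidableEq ι] [Fintype κ]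
    (g : (ι → ℝ) → (κ → ℝ)) (r : ι → ℝ) : Matrix κ ι ℝ :=
  Matrix.of fun i j => fderiv ℝ g r (Pi.single j 1) i

namespace Matrix

section CommRing

variable {m R : Type*} [Fintype m] [CommRing R] {A J : Matrix m m R}

theorem transpose_neg_mul_eq_neg_mul_neg (hAJ : Aᵀ * J = -(J * A)) :
    (-A)ᵀ * J = -(J * -A) := by
  rw [transpose_neg, Matrix.neg_mul, hAJ, Matrix.mul_neg]

variable [DecidableEq m]

theorem transpose_one_add_mul_mul_one_add_eq_zero (hA : A * A = 1)
    (hAJ : Aᵀ * J = -(J * A)) : (1 + A)ᵀ * J * (1 + A) = 0 := by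
  simp only [transpose_add, transpose_one, add_mul, mul_add, Matrix.one_mul, Matrix.mul_one, hAJ,
    neg_mul, Matrix.mul_assoc, hA]
  abel

theorem transpose_one_sub_mul_mul_one_sub_eq_zero (hA : A * A = 1)
    (hAJ : Aᵀ * J = -(J * A)) : (1 - A)ᵀ * J * (1 - A) = 0 := by
  simpa only [sub_eq_add_neg] using transpose_one_add_mul_mul_one_add_eq_zero
    (by rwa [neg_mul_neg]) (transpose_neg_mul_eq_neg_mul_neg hAJ)

end CommRing

theorem rank_add_le {m n K : Type*} [Fintype n] [Field K] (A B : Matrix m n K) :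
    (A + B).rank ≤ A.rank + B.rank := by
  unfold rank
  rw [mulVecLin_add]
  exact (Submodule.finrank_mono (LinearMap.range_add_le _ _)).trans
    (Submodule.finrank_add_le_finrank_add_finrank _ _)

variable {m K : Type*} [Fintype m] [DecidableEq m] [Field K]

theorem card_le_rank_one_add_add_rank_one_sub [NeZero (2 : K)] (A : Matrix m m K) :
    Fintype.card m ≤ (1 + A).rank + (1 - A).rank := by
  have hunit : IsUnit (2 : Matrix m m K) := by
    have := (IsUnit.mk0 (2 : K) two_ne_zero).map (algebraMap K (Matrix m m K))
    rwa [map_ofNat] at this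
  calc Fintype.card m = (2 : Matrix m m K).rank := (rank_of_isUnit _ hunit).symm
    _ = ((1 + A) + (1 - A)).rank := by rw [add_add_sub_cancel, one_add_one_eq_two]
    _ ≤ (1 + A).rank + (1 - A).rank := rank_add_le _ _

theorem two_mul_rank_le_card_of_transpose_mul_mul_eq_zero {J M : Matrix m m K}
    (hJ : IsUnit J.det) (h : Mᵀ * J * M = 0) : 2 * M.rank ≤ Fintype.card m := by
  have := rank_add_rank_le_card_of_mul_eq_zero (A := Mᵀ) (B := J * M)
    (by rwa [← Matrix.mul_assoc])
  rw [rank_transpose, rank_mul_eq_right_of_isUnit_det _ _ hJ] at this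
  omega

variable [NeZero (2 : K)] {A J : Matrix m m K}

theorem two_mul_rank_one_add_eq_card (hJ : IsUnit J.det) (hA : A * A = 1)
    (hAJ : Aᵀ * J = -(J * A)) : 2 * (1 + A).rank = Fintype.card m := by
  have hadd := two_mul_rank_le_card_of_transpose_mul_mul_eq_zero hJ
    (transpose_one_add_mul_mul_one_add_eq_zero hA hAJ)
  have hsub := two_mul_rank_le_card_of_transpose_mul_mul_eq_zero hJ
    (transpose_one_sub_mul_mul_one_sub_eq_zero hA hAJ)
  have := card_le_rank_one_add_add_rank_one_sub A
  omega

theorem two_mul_rank_one_sub_eq_card (hJ : IsUnit J.det) (hA : A * A = 1)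
    (hAJ : Aᵀ * J = -(J * A)) : 2 * (1 - A).rank = Fintype.card m := by
  simpa only [sub_eq_add_neg] using two_mul_rank_one_add_eq_card hJ
    (by rwa [neg_mul_neg]) (transpose_neg_mul_eq_neg_mul_neg hAJ)

end Matrix

section Jacobian

variable {ι κ : Type*} [Fintype ι] [DecidableEq ι] [Fintype κ]

theorem jacM_eq_toMatrix' (g : (ι → ℝ) → (κ → ℝ)) (r : ι → ℝ) :
    jacM g r = LinearMap.toMatrix' (fderiv ℝ g r : (ι → ℝ) →ₗ[ℝ] κ → ℝ) := by
  ext i j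
  simp [jacM, LinearMap.toMatrix'_apply]

theorem jacM_id_add {g : (ι → ℝ) → (ι → ℝ)} {r : ι → ℝ} (hg : DifferentiableAt ℝ g r) :
    jacM (fun x => x + g x) r = 1 + jacM g r := by
  have : HasFDerivAt (fun x => x + g x) (.id ℝ _ + fderiv ℝ g r) r :=
    (hasFDerivAt_id r).add hg.hasFDerivAt
  rw [jacM_eq_toMatrix', jacM_eq_toMatrix', this.fderiv]
  simp

theorem jacM_id_sub {g : (ι → ℝ) → (ι → ℝ)} {r : ι → ℝ} (hg : DifferentiableAt ℝ g r) :
    jacM (fun x => x - g x) r = 1 - jacM g r := by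
  have : HasFDerivAt (fun x => x - g x) (.id ℝ _ - fderiv ℝ g r) r :=
    (hasFDerivAt_id r).sub hg.hasFDerivAt
  rw [jacM_eq_toMatrix', jacM_eq_toMatrix', this.fderiv]
  simp

theorem jacM_mulVec_comp {μ : Type*} [Fintype μ] (M : Matrix μ κ ℝ) {g : (ι → ℝ) → (κ → ℝ)}
    {r : ι → ℝ} (hg : DifferentiableAt ℝ g r) :
    jacM (fun x => M *ᵥ g x) r = M * jacM g r := by
  have : HasFDerivAt (fun x => M *ᵥ g x)
      (M.mulVecLin.toContinuousLinearMap.comp (fderiv ℝ g r)) r :=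
    M.mulVecLin.toContinuousLinearMap.hasFDerivAt.comp r hg.hasFDerivAt
  classical
  rw [jacM_eq_toMatrix', jacM_eq_toMatrix', this.fderiv, ContinuousLinearMap.toLinearMap_comp,
    LinearMap.coe_toContinuousLinearMap, LinearMap.toMatrix'_comp, ← Matrix.toLin'_apply',
    LinearMap.toMatrix'_toLin']

end Jacobian

section Hessian

variable {ι : Type*} [Fintype ι] [DecidableEq ι] {F : (ι → ℝ) → ℝ} {x : ι → ℝ}

noncomputable def coordGrad (F : (ι → ℝ) → ℝ) (x : ι → ℝ) : ι → ℝ :=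
  fun i => fderiv ℝ F x (Pi.single i 1)

theorem hasFDerivAt_coordGrad (hF : ContDiffAt ℝ 2 F x) :
    HasFDerivAt (coordGrad F)
      (.pi fun i => (fderiv ℝ (fderiv ℝ F) x).flip (Pi.single i 1)) x := by
  have hd : DifferentiableAt ℝ (fderiv ℝ F) x :=
    (hF.fderiv_right (m := 1) (by norm_num)).differentiableAt one_ne_zero
  refine hasFDerivAt_pi.2 fun i => ?_
  simpa [coordGrad] using hd.hasFDerivAt.clm_apply (hasFDerivAt_const (Pi.single i (1 : ℝ)) x)

theorem transpose_jacM_coordGrad (hF : ContDiffAt ℝ 2 F x) :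
    (jacM (coordGrad F) x)ᵀ = jacM (coordGrad F) x := by
  ext i j
  simp only [transpose_apply, jacM, of_apply, (hasFDerivAt_coordGrad hF).fderiv,
    ContinuousLinearMap.pi_apply, ContinuousLinearMap.flip_apply]
  exact hF.isSymmSndFDerivAt (by simp) _ _

end Hessian

theorem Matrix.transpose_J_mul_mul_J {l R : Type*} [Fintype l] [DecidableEq l] [CommRing R]
    {H : Matrix (l ⊕ l) (l ⊕ l) R} (hH : Hᵀ = H) :
    (J l R * H)ᵀ * J l R = -(J l R * (J l R * H)) := by
  rw [transpose_mul, hH, J_transpose, Matrix.mul_neg, Matrix.neg_mul, Matrix.mul_assoc,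
    ← Matrix.mul_assoc (J l R), J_squared, Matrix.neg_mul, Matrix.mul_neg, Matrix.one_mul,
    Matrix.mul_one]

section Symplectic

variable {n : ℕ}

theorem sform_eq_neg_dotProduct_J_mulVec (u v : Fin n ⊕ Fin n → ℝ) :
    sform n u v = -(u ⬝ᵥ J (Fin n) ℝ *ᵥ v) := by
  simp [sform, J, dotProduct, Fintype.sum_sum_type, fromBlocks_mulVec, neg_mulVec,
    Finset.sum_sub_distrib, mul_comm, neg_add_eq_sub]

theorem sform_mulVec_mulVec (M : Matrix (Fin n ⊕ Fin n) (Fin n ⊕ Fin n) ℝ)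
    (u v : Fin n ⊕ Fin n → ℝ) :
    sform n (M *ᵥ u) (M *ᵥ v) = -(u ⬝ᵥ (Mᵀ * J (Fin n) ℝ * M) *ᵥ v) := by
  rw [sform_eq_neg_dotProduct_J_mulVec, dotProduct_mulVec, vecMul_mulVec, ← mulVec_mulVec,
    ← dotProduct_mulVec, ← vecMul_transpose]

theorem hamVF_eq_J_mulVec_coordGrad (F : (Fin n ⊕ Fin n → ℝ) → ℝ) :
    hamVF n F = fun x => J (Fin n) ℝ *ᵥ coordGrad F x := by
  ext x (i | i) <;> simp [hamVF, coordGrad, J, fromBlocks_mulVec, neg_mulVec]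

variable {F : (Fin n ⊕ Fin n → ℝ) → ℝ} {x : Fin n ⊕ Fin n → ℝ}

theorem differentiableAt_hamVF (hF : ContDiffAt ℝ 2 F x) :
    DifferentiableAt ℝ (hamVF n F) x := by
  rw [hamVF_eq_J_mulVec_coordGrad]
  exact (J (Fin n) ℝ).mulVecLin.toContinuousLinearMap.differentiableAt.comp x
    (hasFDerivAt_coordGrad hF).differentiableAt

theorem jacM_hamVF (hF : ContDiffAt ℝ 2 F x) :
    jacM (hamVF n F) x = J (Fin n) ℝ * jacM (coordGrad F) x := by
  rw [hamVF_eq_J_mulVec_coordGrad]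
  exact jacM_mulVec_comp _ (hasFDerivAt_coordGrad hF).differentiableAt

end Symplectic

theorem stmt17_general (n : ℕ) (V : Set (Fin n ⊕ Fin n → ℝ)) (hV : IsOpen V)
    (F : (Fin n ⊕ Fin n → ℝ) → ℝ) (hF : ContDiffOn ℝ 2 F V)
    (hsq : ∀ x ∈ V, jacM (hamVF n F) x * jacM (hamVF n F) x = 1)
    (p₁ p₂ : (Fin n ⊕ Fin n → ℝ) → (Fin n ⊕ Fin n → ℝ))
    (hp₁ : ∀ x, p₁ x = x + hamVF n F x) (hp₂ : ∀ x, p₂ x = x - hamVF n F x) :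
    ∀ x ∈ V,
      -- (i) the Jacobians of `p₁` and `p₂` have rank exactly `n`
      (jacM p₁ x).rank = n ∧ (jacM p₂ x).rank = n ∧
      -- (ii) the images of `Dp₁(x)` and `Dp₂(x)` are ω-isotropic
      (∀ u v : Fin n ⊕ Fin n → ℝ,
        sform n ((jacM p₁ x).mulVec u) ((jacM p₁ x).mulVec v) = 0) ∧
      (∀ u v : Fin n ⊕ Fin n → ℝ,
        sform n ((jacM p₂ x).mulVec u) ((jacM p₂ x).mulVec v) = 0) := by
  intro x hx
  have hFx : ContDiffAt ℝ 2 F x := hF.contDiffAt (hV.mem_nhds hx)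
  have hAJ : (jacM (hamVF n F) x)ᵀ * J (Fin n) ℝ = -(J (Fin n) ℝ * jacM (hamVF n F) x) := by
    rw [jacM_hamVF hFx]
    exact transpose_J_mul_mul_J (transpose_jacM_coordGrad hFx)
  have h₁ : jacM p₁ x = 1 + jacM (hamVF n F) x := by
    rw [funext hp₁]
    exact jacM_id_add (differentiableAt_hamVF hFx)
  have h₂ : jacM p₂ x = 1 - jacM (hamVF n F) x := by
    rw [funext hp₂]
    exact jacM_id_sub (differentiableAt_hamVF hFx)
  have hA := hsq x hx
  generalize jacM (hamVF n F) x = A at hA hAJ h₁ h₂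
  have hJ := isUnit_det_J (Fin n) ℝ
  have hr₁ := two_mul_rank_one_add_eq_card hJ hA hAJ
  have hr₂ := two_mul_rank_one_sub_eq_card hJ hA hAJ
  rw [Fintype.card_sum, Fintype.card_fin] at hr₁ hr₂
  rw [h₁, h₂]
  refine ⟨by omega, by omega, fun u v => ?_, fun u v => ?_⟩
  · rw [sform_mulVec_mulVec, transpose_one_add_mul_mul_one_add_eq_zero hA hAJ,
      zero_mulVec, dotProduct_zero, neg_zero]
  · rw [sform_mulVec_mulVec, transpose_one_sub_mul_mul_one_sub_eq_zero hA hAJ,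
      zero_mulVec, dotProduct_zero, neg_zero]

theorem stmt17 (n : ℕ) (hn : 1 ≤ n) (V : Set (Fin n ⊕ Fin n → ℝ)) (hV : IsOpen V)
    (F : (Fin n ⊕ Fin n → ℝ) → ℝ) (hF : ContDiffOn ℝ 2 F V)
    (hsq : ∀ x ∈ V, jacM (hamVF n F) x * jacM (hamVF n F) x = 1)
    (p₁ p₂ : (Fin n ⊕ Fin n → ℝ) → (Fin n ⊕ Fin n → ℝ))
    (hp₁ : ∀ x, p₁ x = x + hamVF n F x) (hp₂ : ∀ x, p₂ x = x - hamVF n F x) :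
    ∀ x ∈ V,
      -- (i) the Jacobians of `p₁` and `p₂` have rank exactly `n`
      (jacM p₁ x).rank = n ∧ (jacM p₂ x).rank = n ∧
      -- (ii) the images of `Dp₁(x)` and `Dp₂(x)` are ω-isotropic
      (∀ u v : Fin n ⊕ Fin n → ℝ,
        sform n ((jacM p₁ x).mulVec u) ((jacM p₁ x).mulVec v) = 0) ∧
      (∀ u v : Fin n ⊕ Fin n → ℝ,
        sform n ((jacM p₂ x).mulVec u) ((jacM p₂ x).mulVec v) = 0) :=
  stmt17_general n V hV F hF hsq p₁ p₂ hp₁ hp₂
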